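/- arXiv:1602.05494 — 4 statements merged into one kernel-verified Lean document; each statement's English description precedes it below -/
import Mathlib

section
/- Mutation preserves the symmetrizer: if B is an n×n skew-symmetrizable integer matrix and D is a diagonal integer matrix with positive diagonal entries such that BD is skew-symmetric, then for every index k the matrix μ_k(B)·D is also skew-symmetric; in particular μ_k(B) is skew-symmetrizable with the same symmetrizer D. -/
noncomputable section

open Matrix
namespace ClusterPaper

/-- The ambient field `𝕂 = ℂ(x₁, …, xₙ)`, realised as the field of fractions of the
polynomial ring in `n` variables over `ℂ`. -/
abbrev K (n : ℕ) : Type := FractionRing (MvPolynomial (Fin n) ℂ)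

/-- Matrix mutation `μ_k` of an `n × n` integer matrix. -/
def matMut {n : ℕ} (k : Fin n) (B : Matrix (Fin n) (Fin n) ℤ) : Matrix (Fin n) (Fin n) ℤ :=
  Matrix.of fun i j =>
    if i = k ∨ j = k then -B i j
    else B i j + (|B i k| * B k j + B i k * |B k j|) / 2

/-- Simultaneous permutation of rows and columns: `(B^σ)_{i,j} = B_{σ⁻¹ i, σ⁻¹ j}`. -/
def permMat {n : ℕ} (σ : Equiv.Perm (Fin n)) (B : Matrix (Fin n) (Fin n) ℤ) :
    Matrix (Fin n) (Fin n) ℤ :=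
  Matrix.of fun i j => B (σ.symm i) (σ.symm j)

/-- `B` is skew-symmetrizable: there is a diagonal integer matrix `D` with positive
diagonal entries such that `B * D` is skew-symmetric. -/
def IsSkewSymmetrizable {n : ℕ} (B : Matrix (Fin n) (Fin n) ℤ) : Prop :=
  ∃ d : Fin n → ℤ, (∀ i, 0 < d i) ∧
    (B * Matrix.diagonal d)ᵀ = -(B * Matrix.diagonal d)

/-- A labelled seed: a labelled cluster together with an exchange matrix. -/
structure LSeed (n : ℕ) where
  x : Fin n → K n
  B : Matrix (Fin n) (Fin n) ℤ

namespace LSeed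

variable {n : ℕ}

/-- The new cluster variable produced by mutation in direction `k`. -/
def newVar (k : Fin n) (s : LSeed n) : K n :=
  ((∏ j, if 0 < s.B j k then s.x j ^ (s.B j k).toNat else 1) +
    ∏ j, if s.B j k < 0 then s.x j ^ (-s.B j k).toNat else 1) / s.x k

/-- Mutation of a labelled seed in direction `k`. -/
def mutate (k : Fin n) (s : LSeed n) : LSeed n where
  x := Function.update s.x k (newVar k s)
  B := matMut k s.B

/-- Action of a permutation on a labelled seed. -/
def permute (σ : Equiv.Perm (Fin n)) (s : LSeed n) : LSeed n where
  x := fun i => s.x (σ.symm i)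
  B := permMat σ s.B

/-- Membership in the labelled mutation class of `s₀`: the orbit of `s₀` under the
global mutation group (generated by mutations and permutations). -/
inductive InClass (s₀ : LSeed n) : LSeed n → Prop
  | base : InClass s₀ s₀
  | mutStep (k : Fin n) {s : LSeed n} : InClass s₀ s → InClass s₀ (mutate k s)
  | permStep (σ : Equiv.Perm (Fin n)) {s : LSeed n} : InClass s₀ s → InClass s₀ (permute σ s)

end LSeed

open LSeed

/-- The labelled mutation class `S⁰` of `s₀`. -/
abbrev S0 {n : ℕ} (s₀ : LSeed n) : Type := {s : LSeed n // InClass s₀ s}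

theorem permute_one {n : ℕ} (s : LSeed n) : permute 1 s = s := rfl

theorem permute_permute {n : ℕ} (τ σ : Equiv.Perm (Fin n)) (s : LSeed n) :
    permute τ (permute σ s) = permute (τ * σ) s := rfl

/-- Labelled seeds are equivalent if they differ by a permutation. -/
instance seedSetoid {n : ℕ} (s₀ : LSeed n) : Setoid (S0 s₀) where
  r u v := ∃ σ : Equiv.Perm (Fin n), permute σ u.1 = v.1
  iseqv := by
    refine ⟨fun u => ⟨1, permute_one u.1⟩, ?_, ?_⟩
    · rintro u v ⟨σ, h⟩
      exact ⟨σ⁻¹, by rw [← h, permute_permute, inv_mul_cancel, permute_one]⟩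
    · rintro u v w ⟨σ, h⟩ ⟨τ, h'⟩
      exact ⟨τ * σ, by rw [← permute_permute, h, h']⟩

/-- The (unlabelled) mutation class `S = S⁰ / Sym(n)`; its elements are seeds. -/
abbrev S {n : ℕ} (s₀ : LSeed n) : Type := Quotient (seedSetoid s₀)

/-- The quotient map `π : S⁰ → S`. -/
def pr {n : ℕ} {s₀ : LSeed n} (u : S0 s₀) : S s₀ := Quotient.mk (seedSetoid s₀) u

/-- Mutation on the labelled mutation class. -/
def mut0 {n : ℕ} {s₀ : LSeed n} (k : Fin n) (u : S0 s₀) : S0 s₀ :=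
  ⟨LSeed.mutate k u.1, InClass.mutStep k u.2⟩

/-- Permutation action on the labelled mutation class. -/
def perm0 {n : ℕ} {s₀ : LSeed n} (σ : Equiv.Perm (Fin n)) (u : S0 s₀) : S0 s₀ :=
  ⟨LSeed.permute σ u.1, InClass.permStep σ u.2⟩

/-- Adjacency in the exchange graph `E(S)`: two distinct seeds joined by a single mutation. -/
def Adj {n : ℕ} {s₀ : LSeed n} (a b : S s₀) : Prop :=
  a ≠ b ∧ ∃ (u : S0 s₀) (k : Fin n), pr u = a ∧ pr (mut0 k u) = b

/-- An automorphism of the exchange graph `E(S)`. -/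
def IsExchAut {n : ℕ} {s₀ : LSeed n} (φ : Equiv.Perm (S s₀)) : Prop :=
  ∀ a b : S s₀, Adj a b ↔ Adj (φ a) (φ b)

/-- A label-preserving automorphism of the labelled exchange graph `Δ(S⁰)`:
a bijection commuting with every mutation `μ_k` (edges labelled `k`). -/
def IsLabAut {n : ℕ} {s₀ : LSeed n} (g : Equiv.Perm (S0 s₀)) : Prop :=
  ∀ (u : S0 s₀) (k : Fin n), g (mut0 k u) = mut0 k (g u)

/-- `g` is the pullback `φ^Δ` of the exchange-graph automorphism `φ`. -/
def IsPullback {n : ℕ} {s₀ : LSeed n} (φ : Equiv.Perm (S s₀)) (g : Equiv.Perm (S0 s₀)) :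
    Prop :=
  IsLabAut g ∧ ∀ u : S0 s₀, pr (g u) = φ (pr u)

/-- A bijection of the labelled mutation class commuting with the action of the global
mutation group `M_n` (equivalently with all mutations and all permutations). -/
def IsMnAut {n : ℕ} {s₀ : LSeed n} (g : Equiv.Perm (S0 s₀)) : Prop :=
  (∀ (u : S0 s₀) (k : Fin n), g (mut0 k u) = mut0 k (g u)) ∧
    ∀ (u : S0 s₀) (σ : Equiv.Perm (Fin n)), g (perm0 σ u) = perm0 σ (g u)

/-- The mutation class of `s₀` is mutation-finite. -/
def MutationFinite {n : ℕ} (s₀ : LSeed n) : Prop :=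
  Set.Finite {B : Matrix (Fin n) (Fin n) ℤ | ∃ s, InClass s₀ s ∧ s.B = B}

/-- Standing assumption: the exchange matrix of a seed is determined by its cluster. -/
def DetByCluster {n : ℕ} (s₀ : LSeed n) : Prop :=
  ∀ s t : LSeed n, InClass s₀ s → InClass s₀ t → s.x = t.x → s.B = t.B

/-- A cluster automorphism of the cluster algebra of the mutation class of `s₀`:
a `𝕂`-automorphism sending some seed's cluster to a cluster, with matrix `B` or `-B`. -/
def IsClusterAut {n : ℕ} (s₀ : LSeed n) (f : K n ≃ₐ[ℂ] K n) : Prop :=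
  ∃ s : LSeed n, InClass s₀ s ∧ ∃ t : LSeed n, InClass s₀ t ∧
    (∀ i, f (s.x i) = t.x i) ∧ (t.B = s.B ∨ t.B = -s.B)

/-- A direct cluster automorphism: the exchange matrix is preserved (not negated). -/
def IsDirectClusterAut {n : ℕ} (s₀ : LSeed n) (f : K n ≃ₐ[ℂ] K n) : Prop :=
  ∃ s : LSeed n, InClass s₀ s ∧ ∃ t : LSeed n, InClass s₀ t ∧
    (∀ i, f (s.x i) = t.x i) ∧ t.B = s.B

/-- Alternating mutations in the two directions `i, j`, starting with `i`. -/
def altMut {n : ℕ} : Fin n → Fin n → ℕ → LSeed n → LSeed n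
  | _, _, 0, s => s
  | i, j, c + 1, s => altMut j i c (LSeed.mutate i s)

/-- The length of the geodesic loop `L^{i,j}_u`: the minimal number of alternating
mutations in positions `i, j` returning to the seed `[u]` in the exchange graph
(`⊤` if the loop is an infinite line). -/
def loopLen {n : ℕ} (u : LSeed n) (i j : Fin n) : ℕ∞ :=
  sInf {r : ℕ∞ | ∃ c : ℕ, 0 < c ∧ r = (c : ℕ∞) ∧
    ∃ σ : Equiv.Perm (Fin n), permute σ (altMut i j c u) = u}

/-- `N⁰(u)`: the multiset of lengths of the `C(n,2)` geodesic loops at distance 0 from `u`. -/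
def N0 {n : ℕ} (u : LSeed n) : Multiset ℕ∞ :=
  (Finset.filter (fun p : Fin n × Fin n => p.1 < p.2) Finset.univ).val.map fun p =>
    loopLen u p.1 p.2

/-- `N¹(u)`: the multiset of lengths of the `n·C(n-1,2)` geodesic loops at distance 1
from `u`. -/
def N1 {n : ℕ} (u : LSeed n) : Multiset ℕ∞ :=
  (Finset.filter
      (fun p : Fin n × Fin n × Fin n => p.2.1 < p.2.2 ∧ p.1 ≠ p.2.1 ∧ p.1 ≠ p.2.2)
      Finset.univ).val.map fun p => loopLen (LSeed.mutate p.1 u) p.2.1 p.2.2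

/-- The weight `-b_{ij}·b_{ji}` of the arrow between vertices `i` and `j` in the diagram. -/
def weight {n : ℕ} (B : Matrix (Fin n) (Fin n) ℤ) (i j : Fin n) : ℤ :=
  -(B i j * B j i)

/-- Two skew-symmetrizable matrices have the same diagram: same arrow orientations and
the same weights. -/
def SameDiagram {n : ℕ} (B C : Matrix (Fin n) (Fin n) ℤ) : Prop :=
  ∀ i j, (0 < B i j ↔ 0 < C i j) ∧ B i j * B j i = C i j * C j i

/-- The diagram of `B` is connected. -/
def DiagramConnected {n : ℕ} (B : Matrix (Fin n) (Fin n) ℤ) : Prop :=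
  ∀ i j : Fin n, Relation.ReflTransGen (fun a b => B a b ≠ 0) i j

/-- A marking of the labelled mutation class of `s₀`: a coherent assignment of a
symmetrizer to every labelled seed in the class, constant along mutations and permuted
by permutations. -/
def IsMarking {n : ℕ} (s₀ : LSeed n) (mk : LSeed n → Fin n → ℤ) : Prop :=
  (∀ s, InClass s₀ s → ∀ k : Fin n, mk (LSeed.mutate k s) = mk s) ∧
  (∀ s, InClass s₀ s → ∀ σ : Equiv.Perm (Fin n),
      mk (LSeed.permute σ s) = fun i => mk s (σ.symm i)) ∧
  (∀ s, InClass s₀ s → (∀ i, 0 < mk s i) ∧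
      (s.B * Matrix.diagonal (mk s))ᵀ = -(s.B * Matrix.diagonal (mk s)))

/-- An automorphism of the marked exchange graph `Ê(S)`: an exchange graph automorphism
whose pullback to the labelled exchange graph preserves the marking. -/
def IsMarkedExchAut {n : ℕ} {s₀ : LSeed n} (mk : LSeed n → Fin n → ℤ)
    (φ : Equiv.Perm (S s₀)) : Prop :=
  IsExchAut φ ∧ ∃ g : Equiv.Perm (S0 s₀), IsPullback φ g ∧ ∀ u : S0 s₀, mk (g u).1 = mk u.1

/-- The initial labelled seed with cluster `(x₁, …, xₙ)` and exchange matrix `B`. -/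
def initSeed (n : ℕ) (B : Matrix (Fin n) (Fin n) ℤ) : LSeed n :=
  ⟨fun i => algebraMap (MvPolynomial (Fin n) ℂ) (K n) (MvPolynomial.X i), B⟩

/-- The composite mutation `μ̃_k = ∏_{r ∈ E_k} μ_r`, where `E_k` is the fiber of `p` over
`k` (the mutations at the indices of `E_k` pairwise commute). -/
def compMut {m n : ℕ} (p : Fin m → Fin n) (k : Fin n) (M : Matrix (Fin m) (Fin m) ℤ) :
    Matrix (Fin m) (Fin m) ℤ :=
  (Finset.sort (Finset.filter (fun r : Fin m => p r = k) Finset.univ) (· ≤ ·)).foldl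
    (fun M r => matMut r M) M

/-- Conditions (a) and (b) of the definition of an unfolding: every column of the
`E_i × E_j` block of `C` sums to `B i j`, and if `B i j > 0` then the whole block is
non-negative. -/
def UnfoldCond {m n : ℕ} (p : Fin m → Fin n) (B : Matrix (Fin n) (Fin n) ℤ)
    (C : Matrix (Fin m) (Fin m) ℤ) : Prop :=
  (∀ (i j : Fin n) (c : Fin m), p c = j →
      ∑ r ∈ Finset.filter (fun r : Fin m => p r = i) Finset.univ, C r c = B i j) ∧
  ∀ i j : Fin n, 0 < B i j → ∀ r c : Fin m, p r = i → p c = j → 0 ≤ C r c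

/-- `C` is an unfolding of `B` (with symmetrizer `d` and blocks given by the fibers of
`p`): the diagonal blocks vanish, `C` is skew-symmetric, and conditions (a), (b) hold
after every sequence of composite mutations matching mutations of `B`. -/
def IsUnfolding {m n : ℕ} (p : Fin m → Fin n) (d : Fin n → ℤ)
    (B : Matrix (Fin n) (Fin n) ℤ) (C : Matrix (Fin m) (Fin m) ℤ) : Prop :=
  (∀ i : Fin n, (Finset.filter (fun r : Fin m => p r = i) Finset.univ).card = (d i).toNat) ∧
  (∀ r c : Fin m, p r = p c → C r c = 0) ∧
  Cᵀ = -C ∧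
  ∀ ks : List (Fin n),
    UnfoldCond p (ks.foldl (fun M k => matMut k M) B)
      (ks.foldl (fun M k => compMut p k M) C)

end ClusterPaper
open Matrix ClusterPaper ClusterPaper.LSeed in
/-- Mutation preserves the symmetrizer: if `B·D` is skew-symmetric, `D`
diagonal with positive entries, then `μ_k(B)·D` is skew-symmetric for every `k`;
in particular `μ_k(B)` is skew-symmetrizable with the same symmetrizer. -/
theorem mutation_preserves_symmetrizer {n : ℕ} (B : Matrix (Fin n) (Fin n) ℤ)
    (d : Fin n → ℤ) (hd : ∀ i, 0 < d i)
    (h : (B * Matrix.diagonal d)ᵀ = -(B * Matrix.diagonal d)) (k : Fin n) :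
    (matMut k B * Matrix.diagonal d)ᵀ = -(matMut k B * Matrix.diagonal d) := by
  have h' : ∀ i j, B j i * d i = -(B i j * d j) := by
    intro i j
    have := congrFun (congrFun h i) j
    simpa [Matrix.mul_diagonal] using this
  have hev : ∀ a b : ℤ, 2 * ((|a| * b + a * |b|) / 2) = |a| * b + a * |b| := by
    intro a b
    refine Int.mul_ediv_cancel' ?_
    rcases abs_choice a with h1 | h1 <;> rcases abs_choice b with h2 | h2 <;> rw [h1, h2]
    · exact ⟨a * b, by ring⟩
    · exact ⟨0, by ring⟩
    · exact ⟨0, by ring⟩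
    · exact ⟨-(a * b), by ring⟩
  ext i j
  simp only [Matrix.transpose_apply, Matrix.mul_diagonal, Matrix.neg_apply]
  by_cases hik : i = k
  · subst hik
    by_cases hjk : j = i
    · subst hjk
      simp [matMut]
      linarith [h' j j]
    · simp [matMut, hjk]
      linarith [h' i j]
  · by_cases hjk : j = k
    · subst hjk
      simp [matMut, hik]
      linarith [h' i j]
    · simp only [matMut, Matrix.of_apply, hik, hjk, or_self, if_false, or_false]
      have e1 : B k i * d i = -(B i k * d k) := h' i k
      have e2 : B j k * d k = -(B k j * d j) := h' k j
      have e3 : |B k i| * d i = |B i k| * d k := by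
        have h1 : |B k i * d i| = |B i k * d k| := by rw [e1, abs_neg]
        rwa [abs_mul, abs_mul, abs_of_pos (hd i), abs_of_pos (hd k)] at h1
      have e4 : |B j k| * d k = |B k j| * d j := by
        have h1 : |B j k * d k| = |B k j * d j| := by rw [e2, abs_neg]
        rwa [abs_mul, abs_mul, abs_of_pos (hd k), abs_of_pos (hd j)] at h1
      have key : (|B j k| * B k i + B j k * |B k i|) * d i
          = -((|B i k| * B k j + B i k * |B k j|) * d j) := by
        linear_combination |B j k| * e1 - B i k * e4 + B j k * e3 + |B i k| * e2
      have hgoal : 2 * ((B j i + (|B j k| * B k i + B j k * |B k i|) / 2) * d i)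
          = 2 * (-((B i j + (|B i k| * B k j + B i k * |B k j|) / 2) * d j)) := by
        have ha := hev (B j k) (B k i)
        have hb := hev (B i k) (B k j)
        linear_combination 2 * h' i j + d i * ha + d j * hb + key
      linarith
end
end

section
/- Mutations at non-adjacent indices commute: if B is an n×n skew-symmetrizable integer matrix and j,k are indices with b_{j,k} = 0 (equivalently b_{k,j} = 0), then μ_j(μ_k(B)) = μ_k(μ_j(B)); moreover, for a labelled seed (x,B), ((x,B)·μ_j)·μ_k = ((x,B)·μ_k)·μ_j. -/
noncomputable section

open Matrix
open ClusterPaper ClusterPaper.LSeed in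
lemma ClusterPaper.matMut_comm {n : ℕ} (B : Matrix (Fin n) (Fin n) ℤ) (j k : Fin n)
    (h0 : B j k = 0) (hkj : B k j = 0) :
    matMut j (matMut k B) = matMut k (matMut j B) := by
  by_cases hjk : j = k
  · subst hjk; rfl
  have hkj2 : ¬ k = j := fun h => hjk h.symm
  ext i l
  simp only [matMut, Matrix.of_apply]
  by_cases hij : i = j <;> by_cases hik : i = k <;> by_cases hlj : l = j <;>
    by_cases hlk : l = k <;> simp_all <;> ring

open ClusterPaper ClusterPaper.LSeed in
lemma ClusterPaper.newVar_mutate {n : ℕ} (s : LSeed n) (a b : Fin n) (hab : a ≠ b)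
    (hba : s.B b a = 0) : newVar a (mutate b s) = newVar a s := by
  have hxa : (mutate b s).x a = s.x a := Function.update_of_ne hab _ _
  have hBcol : ∀ i : Fin n, (mutate b s).B i a = if i = b then 0 else s.B i a := by
    intro i
    by_cases hib : i = b
    · subst hib
      simp [mutate, matMut, hba]
    · simp [mutate, matMut, hib, hab, hba]
  have hxne : ∀ i : Fin n, i ≠ b → (mutate b s).x i = s.x i :=
    fun i hi => Function.update_of_ne hi _ _
  unfold newVar
  rw [hxa]
  congr 1
  congr 1
  · refine Finset.prod_congr rfl fun i _ => ?_
    by_cases hib : i = b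
    · subst hib
      rw [hBcol]
      simp [hba]
    · rw [hBcol, if_neg hib, hxne i hib]
  · refine Finset.prod_congr rfl fun i _ => ?_
    by_cases hib : i = b
    · subst hib
      rw [hBcol]
      simp [hba]
    · rw [hBcol, if_neg hib, hxne i hib]

open ClusterPaper ClusterPaper.LSeed in
/-- Mutations at non-adjacent indices commute: if `B` is skew-symmetrizable
with `b_{jk} = 0`, then `μ_j (μ_k B) = μ_k (μ_j B)`, and for a labelled seed `(x,B)`,
`((x,B)·μ_j)·μ_k = ((x,B)·μ_k)·μ_j`. -/
theorem nonadjacent_mutations_commute {n : ℕ} (s : LSeed n)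
    (hx : AlgebraicIndependent ℂ s.x) (hB : IsSkewSymmetrizable s.B)
    (j k : Fin n) (h0 : s.B j k = 0) :
    matMut j (matMut k s.B) = matMut k (matMut j s.B) ∧
      mutate j (mutate k s) = mutate k (mutate j s) := by
  have hkj : s.B k j = 0 := by
    obtain ⟨d, hd, hskew⟩ := hB
    have h1 := congrFun (congrFun hskew k) j
    simp only [Matrix.transpose_apply, Matrix.mul_diagonal, Matrix.neg_apply] at h1
    rw [h0, zero_mul] at h1
    have h2 : s.B k j * d j = 0 := by linarith
    rcases mul_eq_zero.mp h2 with h | h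
    · exact h
    · exact absurd h (ne_of_gt (hd j))
  refine ⟨ClusterPaper.matMut_comm s.B j k h0 hkj, ?_⟩
  by_cases hjk : j = k
  · subst hjk; rfl
  have hnj : newVar j (mutate k s) = newVar j s :=
    ClusterPaper.newVar_mutate s j k hjk hkj
  have hnk : newVar k (mutate j s) = newVar k s :=
    ClusterPaper.newVar_mutate s k j (fun h => hjk h.symm) h0
  show LSeed.mk _ _ = LSeed.mk _ _
  rw [LSeed.mk.injEq]
  constructor
  · show Function.update (mutate k s).x j (newVar j (mutate k s)) =
      Function.update (mutate j s).x k (newVar k (mutate j s))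
    rw [hnj, hnk]
    show Function.update (Function.update s.x k (newVar k s)) j (newVar j s) =
      Function.update (Function.update s.x j (newVar j s)) k (newVar k s)
    exact Function.update_comm (fun h => hjk h.symm) _ _ _
  · exact ClusterPaper.matMut_comm s.B j k h0 hkj
end
end

section
/- The pullback of an exchange graph automorphism commutes with permutations: for φ ∈ Aut E(S) with pullback φ^Δ ∈ Aut Δ(S⁰), for every labelled seed u ∈ S⁰ and every permutation σ ∈ Sym(n), φ^Δ(u·σ) = φ^Δ(u)·σ. -/
noncomputable section

open Matrix
/-! ### Auxiliary lemmas -/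

namespace ClusterPaperAux

set_option maxHeartbeats 1000000
set_option synthInstance.maxHeartbeats 400000

open MvPolynomial ClusterPaper ClusterPaper.LSeed

/-- If `t` is transcendental over `R` then so is `c/t` for any nonzero `c` from `R`. -/
theorem transcendental_const_div {R K : Type*} [CommRing R] [Field K] [Algebra R K]
    (hinj : Function.Injective (algebraMap R K))
    (c : R) (hc : algebraMap R K c ≠ 0) {t : K} (ht : Transcendental R t) :
    Transcendental R (algebraMap R K c / t) := by
  haveI : Nontrivial R := by
    refine ⟨0, 1, fun h => ?_⟩
    have := congrArg (algebraMap R K) h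
    simp at this
  rw [transcendental_iff] at ht ⊢
  have ht0 : t ≠ 0 := by
    rintro rfl
    exact Polynomial.X_ne_zero (ht Polynomial.X (by simp))
  intro p hp
  set d := p.natDegree with hd
  set q : Polynomial R := ∑ i ∈ Finset.range (d + 1),
      Polynomial.C (p.coeff i * c ^ i) * Polynomial.X ^ (d - i) with hq
  have hqcoeff : ∀ i, i ≤ d → q.coeff (d - i) = p.coeff i * c ^ i := by
    intro i hi
    rw [hq, Polynomial.finset_sum_coeff, Finset.sum_eq_single i]
    · rw [Polynomial.coeff_C_mul, Polynomial.coeff_X_pow, if_pos rfl, mul_one]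
    · intro j hj hji
      have hj' : j ≤ d := by have := Finset.mem_range.1 hj; omega
      rw [Polynomial.coeff_C_mul, Polynomial.coeff_X_pow,
        if_neg (fun hcon => hji (by omega)), mul_zero]
    · intro h; exact absurd (Finset.mem_range.2 (by omega)) h
  have hq0 : Polynomial.aeval t q = 0 := by
    have hexp : Polynomial.aeval (algebraMap R K c / t) p
        = ∑ i ∈ Finset.range (d + 1), p.coeff i • (algebraMap R K c / t) ^ i :=
      Polynomial.aeval_eq_sum_range _
    have h2 := congrArg (fun z : K => z * t ^ d) hp
    simp only [zero_mul] at h2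
    rw [hexp, Finset.sum_mul] at h2
    rw [hq, map_sum, ← h2]
    refine Finset.sum_congr rfl fun i hi => ?_
    have hi' : i ≤ d := by have := Finset.mem_range.1 hi; omega
    have h3 : t ^ d = t ^ (d - i) * t ^ i := by rw [← pow_add]; congr 1; omega
    rw [_root_.map_mul, Polynomial.aeval_C, map_pow, Polynomial.aeval_X, Algebra.smul_def,
      _root_.map_mul, map_pow, h3, div_pow]
    field_simp
  have hq' : q = 0 := ht q hq0
  ext i
  rcases le_or_gt i d with hi | hi
  · have h4 : p.coeff i * c ^ i = 0 := by rw [← hqcoeff i hi, hq', Polynomial.coeff_zero]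
    have h5 := congrArg (algebraMap R K) h4
    rw [_root_.map_mul, map_pow, map_zero] at h5
    rcases mul_eq_zero.1 h5 with h6 | h6
    · simpa using hinj (h6.trans (map_zero _).symm)
    · exact absurd h6 (pow_ne_zero _ hc)
  · simp [Polynomial.coeff_eq_zero_of_natDegree_lt (by omega : p.natDegree < i)]

theorem algebraicIndependent_update_div {F K : Type*} [Field F] [Field K] [Algebra F K]
    {n : ℕ} {x : Fin n → K} (hx : AlgebraicIndependent F x) (k : Fin n)
    {c : K} (hc0 : c ≠ 0) (hcA : c ∈ Algebra.adjoin F (x '' {j | j ≠ k})) :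
    AlgebraicIndependent F (Function.update x k (c / x k)) := by
  set x' : {j : Fin n // j ≠ k} → K := fun j => x j.1 with hx'def
  have hx' : AlgebraicIndependent F x' := hx.comp Subtype.val Subtype.val_injective
  have hrange : Set.range x' = x '' {j | j ≠ k} := by
    ext z; constructor
    · rintro ⟨j, rfl⟩; exact ⟨j.1, j.2, rfl⟩
    · rintro ⟨j, hj, rfl⟩; exact ⟨⟨j, hj⟩, rfl⟩
  set e := Equiv.optionSubtypeNe k
  rw [← algebraicIndependent_equiv e]
  have hcomp : (Function.update x k (c / x k)) ∘ e
      = fun o : Option {j : Fin n // j ≠ k} => o.elim (c / x k) x' := by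
    funext o
    cases o with
    | none => simp [e]
    | some j => simp [e, Function.update_of_ne j.2, hx'def]
  rw [hcomp, hx'.option_iff_transcendental _]
  have hxe : AlgebraicIndependent F (x ∘ e) := hx.comp e e.injective
  have hcomp2 : x ∘ e = fun o : Option {j : Fin n // j ≠ k} => o.elim (x k) x' := by
    funext o; cases o with
    | none => rfl
    | some j => rfl
  rw [hcomp2, hx'.option_iff_transcendental _] at hxe
  have hcA' : c ∈ Algebra.adjoin F (Set.range x') := by rw [hrange]; exact hcA
  have hinj : Function.Injective (algebraMap (Algebra.adjoin F (Set.range x')) K) :=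
    Subtype.val_injective
  have hcne : algebraMap (Algebra.adjoin F (Set.range x')) K ⟨c, hcA'⟩ ≠ 0 := by
    intro h
    exact hc0 h
  exact transcendental_const_div hinj ⟨c, hcA'⟩ hcne hxe

theorem even_abs_comb (a b : ℤ) : (2:ℤ) ∣ (|a| * b + a * |b|) := by
  rcases abs_choice a with h | h <;> rcases abs_choice b with h' | h' <;>
    rw [h, h'] <;> [exact ⟨a*b, by ring⟩; exact ⟨0, by ring⟩; exact ⟨0, by ring⟩;
      exact ⟨-(a*b), by ring⟩]

theorem matMut_skew {n : ℕ} {B : Matrix (Fin n) (Fin n) ℤ} {d : Fin n → ℤ}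
    (hd : ∀ i, 0 < d i) (h : ∀ i j, B j i * d i = -(B i j * d j)) (k : Fin n) :
    ∀ i j, (matMut k B) j i * d i = -((matMut k B) i j * d j) := by
  intro i j
  unfold matMut
  simp only [Matrix.of_apply]
  by_cases hc : i = k ∨ j = k
  · rw [if_pos hc.symm, if_pos hc]
    linarith [h i j]
  · rw [if_neg (fun hcon => hc hcon.symm), if_neg hc]
    have h1 : B k i * d i = -(B i k * d k) := h i k
    have h2 : B j k * d k = -(B k j * d j) := h k j
    have habs1 : |B k i| * d i = |B i k| * d k := by
      have := congrArg abs h1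
      rwa [abs_neg, abs_mul, abs_mul, abs_of_pos (hd i), abs_of_pos (hd k)] at this
    have habs2 : |B j k| * d k = |B k j| * d j := by
      have := congrArg abs h2
      rwa [abs_neg, abs_mul, abs_mul, abs_of_pos (hd k), abs_of_pos (hd j)] at this
    have hfull : (|B j k| * B k i + B j k * |B k i|) * d i
        = -((|B i k| * B k j + B i k * |B k j|) * d j) := by
      linear_combination |B j k| * h1 + B j k * habs1 + |B i k| * h2 - B i k * habs2
    obtain ⟨m, hm⟩ := even_abs_comb (B j k) (B k i)
    obtain ⟨m', hm'⟩ := even_abs_comb (B i k) (B k j)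
    rw [hm, hm'] at hfull ⊢
    rw [Int.mul_ediv_cancel_left _ two_ne_zero, Int.mul_ediv_cancel_left _ two_ne_zero]
    have hbase := h i j
    have h2g : 2 * ((B j i + m) * d i) = 2 * (-((B i j + m') * d j)) := by
      linear_combination 2 * hbase + hfull
    exact mul_left_cancel₀ two_ne_zero h2g

variable {n : ℕ}

/-- A seed is *good* if its cluster is algebraically independent and its matrix is
entrywise skew-symmetrizable. -/
def Good (s : LSeed n) : Prop :=
  AlgebraicIndependent ℂ s.x ∧
    ∃ d : Fin n → ℤ, (∀ i, 0 < d i) ∧ ∀ i j, s.B j i * d i = -(s.B i j * d j)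

/-- Exponents of the monomial given by the positive part of column `k`. -/
def ecol (B : Matrix (Fin n) (Fin n) ℤ) (k : Fin n) : Fin n →₀ ℕ :=
  Finsupp.equivFunOnFinite.symm fun j => if 0 < B j k then (B j k).toNat else 0

theorem ecol_apply (B : Matrix (Fin n) (Fin n) ℤ) (k j : Fin n) :
    ecol B k j = if 0 < B j k then (B j k).toNat else 0 := rfl

theorem prod_col_eq_aeval (x : Fin n → K n) (B : Matrix (Fin n) (Fin n) ℤ) (k : Fin n) :
    (∏ j, if 0 < B j k then x j ^ (B j k).toNat else 1)
      = MvPolynomial.aeval x (monomial (ecol B k) (1:ℂ)) := by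
  have h1 : MvPolynomial.aeval x (monomial (ecol B k) (1:ℂ))
      = ∏ j ∈ (ecol B k).support, x j ^ (ecol B k) j := by
    rw [← prod_X_pow_eq_monomial, map_prod]
    exact Finset.prod_congr rfl fun j _ => by rw [map_pow, MvPolynomial.aeval_X]
  rw [h1, Finset.prod_subset (Finset.subset_univ (ecol B k).support)
      (fun j _ hj => by rw [Finsupp.notMem_support_iff.1 hj, pow_zero])]
  refine Finset.prod_congr rfl fun j _ => ?_
  rw [ecol_apply]
  split_ifs with hcond
  · rfl
  · rw [pow_zero]

theorem newVar_eq (s : LSeed n) (k : Fin n) :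
    newVar k s = MvPolynomial.aeval s.x
      (monomial (ecol s.B k) (1:ℂ) + monomial (ecol (-s.B) k) 1) / s.x k := by
  rw [newVar, map_add, ← prod_col_eq_aeval, ← prod_col_eq_aeval]
  congr 2
  refine Finset.prod_congr rfl fun j _ => ?_
  rw [Matrix.neg_apply]
  by_cases hcond : s.B j k < 0
  · rw [if_pos hcond, if_pos (by omega : 0 < -s.B j k)]
  · rw [if_neg hcond, if_neg (by omega : ¬ 0 < -s.B j k)]

theorem mon_add_ne_zero (E1 E2 : Fin n →₀ ℕ) :
    (monomial E1 (1:ℂ) + monomial E2 1) ≠ 0 := by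
  intro hcon
  have := congrArg (MvPolynomial.coeff E1) hcon
  rw [MvPolynomial.coeff_add, MvPolynomial.coeff_monomial, MvPolynomial.coeff_monomial,
    if_pos rfl, MvPolynomial.coeff_zero] at this
  split_ifs at this <;> norm_num at this

theorem prod_col_mem_adjoin (x : Fin n → K n) (B : Matrix (Fin n) (Fin n) ℤ) (k : Fin n)
    (hdiag : B k k = 0) :
    (∏ j, if 0 < B j k then x j ^ (B j k).toNat else 1)
      ∈ Algebra.adjoin ℂ (x '' {j | j ≠ k}) := by
  refine Subalgebra.prod_mem _ fun j _ => ?_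
  by_cases hj : 0 < B j k
  · rw [if_pos hj]
    have hjk : j ≠ k := by
      intro hjk; rw [hjk, hdiag] at hj; exact lt_irrefl 0 hj
    exact Subalgebra.pow_mem _ (Algebra.subset_adjoin (Set.mem_image_of_mem x hjk)) _
  · rw [if_neg hj]; exact Subalgebra.one_mem _

theorem Good.diag_zero {s : LSeed n} (hs : Good s) (i : Fin n) : s.B i i = 0 := by
  obtain ⟨-, d, hd, hskew⟩ := hs
  have h := hskew i i
  have hdi := hd i
  have : s.B i i * d i = 0 := by linarith
  rcases mul_eq_zero.1 this with h' | h'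
  · exact h'
  · exact absurd h' (by positivity)

theorem good_mutate {s : LSeed n} (hs : Good s) (k : Fin n) : Good (mutate k s) := by
  obtain ⟨hx, d, hd, hskew⟩ := hs
  constructor
  · show AlgebraicIndependent ℂ (Function.update s.x k (newVar k s))
    have hnv : newVar k s =
        ((∏ j, if 0 < s.B j k then s.x j ^ (s.B j k).toNat else 1) +
          ∏ j, if s.B j k < 0 then s.x j ^ (-s.B j k).toNat else 1) / s.x k := rfl
    rw [hnv]
    refine algebraicIndependent_update_div hx k ?_ ?_
    · have := newVar_eq s k
      rw [hnv] at this
      have hxk : s.x k ≠ 0 := hx.ne_zero k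
      intro hzero
      rw [hzero, zero_div, eq_comm, div_eq_zero_iff] at this
      rcases this with h' | h'
      · exact mon_add_ne_zero _ _ (hx.eq_zero_of_aeval_eq_zero _ h')
      · exact hxk h'
    · have hd2 : ∀ j, (if s.B j k < 0 then s.x j ^ (-s.B j k).toNat else 1)
          = (if 0 < (-s.B) j k then s.x j ^ ((-s.B) j k).toNat else 1) := by
        intro j
        rw [Matrix.neg_apply]
        by_cases hcond : s.B j k < 0
        · rw [if_pos hcond, if_pos (by omega : 0 < -s.B j k)]
        · rw [if_neg hcond, if_neg (by omega : ¬ 0 < -s.B j k)]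
      have hBkk : s.B k k = 0 := Good.diag_zero ⟨hx, d, hd, hskew⟩ k
      refine Subalgebra.add_mem _ (prod_col_mem_adjoin s.x s.B k hBkk) ?_
      rw [Finset.prod_congr rfl fun j _ => hd2 j]
      exact prod_col_mem_adjoin s.x (-s.B) k (by rw [Matrix.neg_apply, hBkk, neg_zero])
  · exact ⟨d, hd, matMut_skew hd hskew k⟩

theorem good_permute {s : LSeed n} (hs : Good s) (σ : Equiv.Perm (Fin n)) :
    Good (permute σ s) := by
  obtain ⟨hx, d, hd, hskew⟩ := hs
  refine ⟨hx.comp σ.symm σ.symm.injective, fun i => d (σ.symm i), fun i => hd _,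
    fun i j => hskew (σ.symm i) (σ.symm j)⟩

theorem good_of_inClass {s₀ : LSeed n} (h0 : Good s₀) :
    ∀ s, InClass s₀ s → Good s := by
  intro s h
  induction h with
  | base => exact h0
  | mutStep k _ ih => exact good_mutate ih k
  | permStep σ _ ih => exact good_permute ih σ

theorem newVar_ne_x {s : LSeed n} (hs : Good s) (b j : Fin n) : newVar b s ≠ s.x j := by
  have hx := hs.1
  intro hcon
  rw [newVar_eq, div_eq_iff (hx.ne_zero b)] at hcon
  have hcon2 : MvPolynomial.aeval s.x
      ((monomial (ecol s.B b) (1:ℂ) + monomial (ecol (-s.B) b) 1)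
        - MvPolynomial.X j * MvPolynomial.X b) = 0 := by
    rw [map_sub, _root_.map_mul, MvPolynomial.aeval_X, MvPolynomial.aeval_X, hcon, sub_self]
  have hpoly := hx.eq_zero_of_aeval_eq_zero _ hcon2
  rw [sub_eq_zero] at hpoly
  have hXX : (MvPolynomial.X j * MvPolynomial.X b : MvPolynomial (Fin n) ℂ)
      = monomial (Finsupp.single j 1 + Finsupp.single b 1) 1 := by
    rw [← one_mul (1:ℂ), ← monomial_mul, ← MvPolynomial.X_pow_eq_monomial,
      ← MvPolynomial.X_pow_eq_monomial, pow_one, pow_one]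
  set E := Finsupp.single j 1 + Finsupp.single b (1:ℕ) with hE
  have hEb : E b ≠ 0 := by
    simp [hE, Finsupp.add_apply, Finsupp.single_apply]
  have h1 : ∀ G : Matrix (Fin n) (Fin n) ℤ, G b b = 0 → ecol G b ≠ E := by
    intro G hG h
    have hb := DFunLike.congr_fun h b
    rw [ecol_apply, hG] at hb
    simp only [lt_irrefl, if_neg (lt_irrefl (0:ℤ))] at hb
    exact hEb hb.symm
  have := congrArg (MvPolynomial.coeff E) hpoly
  rw [hXX, MvPolynomial.coeff_add, MvPolynomial.coeff_monomial, MvPolynomial.coeff_monomial,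
    MvPolynomial.coeff_monomial, if_neg (h1 _ (hs.diag_zero b)),
    if_neg (h1 _ (by rw [Matrix.neg_apply, hs.diag_zero b, neg_zero])), if_pos rfl] at this
  norm_num at this

theorem newVar_ne_newVar {s : LSeed n} (hs : Good s) {a b : Fin n} (hab : a ≠ b) :
    newVar a s ≠ newVar b s := by
  have hx := hs.1
  intro hcon
  rw [newVar_eq, newVar_eq, div_eq_div_iff (hx.ne_zero a) (hx.ne_zero b)] at hcon
  have hcon2 : MvPolynomial.aeval s.x
      ((monomial (ecol s.B a) (1:ℂ) + monomial (ecol (-s.B) a) 1) * MvPolynomial.X b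
        - (monomial (ecol s.B b) 1 + monomial (ecol (-s.B) b) 1) * MvPolynomial.X a) = 0 := by
    rw [map_sub, _root_.map_mul, _root_.map_mul, MvPolynomial.aeval_X, MvPolynomial.aeval_X,
      hcon, sub_self]
  have hpoly := hx.eq_zero_of_aeval_eq_zero _ hcon2
  rw [sub_eq_zero] at hpoly
  have hexp : ∀ (G : Matrix (Fin n) (Fin n) ℤ) (kk i : Fin n),
      (monomial (ecol G kk) (1:ℂ) + monomial (ecol (-G) kk) 1) * MvPolynomial.X i
        = monomial (ecol G kk + Finsupp.single i 1) 1
          + monomial (ecol (-G) kk + Finsupp.single i 1) 1 := by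
    intro G kk i
    rw [add_mul, ← pow_one (MvPolynomial.X i (R := ℂ)), MvPolynomial.X_pow_eq_monomial,
      monomial_mul, monomial_mul, one_mul]
  rw [hexp, hexp] at hpoly
  set E := ecol s.B a + Finsupp.single b (1:ℕ) with hE
  have hEa : E a = 0 := by
    rw [hE, Finsupp.add_apply, ecol_apply, hs.diag_zero a,
      Finsupp.single_apply, if_neg (Ne.symm hab)]
    simp
  have key : ∀ G : Matrix (Fin n) (Fin n) ℤ, ecol G b + Finsupp.single a 1 ≠ E := by
    intro G h
    have ha := DFunLike.congr_fun h a
    rw [Finsupp.add_apply, Finsupp.single_apply, if_pos rfl, hEa] at ha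
    omega
  have := congrArg (MvPolynomial.coeff E) hpoly
  rw [MvPolynomial.coeff_add, MvPolynomial.coeff_add, MvPolynomial.coeff_monomial,
    MvPolynomial.coeff_monomial, MvPolynomial.coeff_monomial, MvPolynomial.coeff_monomial,
    if_pos rfl, if_neg (key _), if_neg (key _)] at this
  split_ifs at this <;> norm_num at this

theorem mutate_index_eq {s : LSeed n} (hs : Good s) {a b : Fin n} (ρ : Equiv.Perm (Fin n))
    (h : permute ρ (mutate a s) = mutate b s) : a = b := by
  by_contra hab
  have hcomp := congrFun (congrArg LSeed.x h) b
  have hL : (permute ρ (mutate a s)).x b = Function.update s.x a (newVar a s) (ρ.symm b) := rfl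
  have hR : (mutate b s).x b = newVar b s := Function.update_self _ _ _
  rw [hL, hR] at hcomp
  by_cases hcase : ρ.symm b = a
  · rw [hcase, Function.update_self] at hcomp
    exact newVar_ne_newVar hs hab hcomp
  · rw [Function.update_of_ne hcase] at hcomp
    exact newVar_ne_x hs b (ρ.symm b) hcomp.symm

theorem newVar_permute (σ : Equiv.Perm (Fin n)) (k : Fin n) (s : LSeed n) :
    newVar k (permute σ s) = newVar (σ.symm k) s := by
  unfold newVar permute permMat
  simp only [Matrix.of_apply]
  erw [Equiv.prod_comp σ.symm
    (fun j => if 0 < s.B j (σ.symm k) then s.x j ^ (s.B j (σ.symm k)).toNat else (1 : K n))]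
  erw [Equiv.prod_comp σ.symm
    (fun j => if s.B j (σ.symm k) < 0 then s.x j ^ (-s.B j (σ.symm k)).toNat else (1 : K n))]

theorem mutate_permute (σ : Equiv.Perm (Fin n)) (k : Fin n) (s : LSeed n) :
    mutate k (permute σ s) = permute σ (mutate (σ.symm k) s) := by
  unfold mutate permute
  congr 1
  · funext i
    show Function.update (fun i => s.x (σ.symm i)) k (newVar k (permute σ s)) i
      = Function.update s.x (σ.symm k) (newVar (σ.symm k) s) (σ.symm i)
    by_cases hik : i = k
    · subst hik
      rw [Function.update_self, Function.update_self, newVar_permute]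
    · rw [Function.update_of_ne hik,
        Function.update_of_ne (fun hcon => hik (σ.symm.injective hcon))]
  · show matMut k (permMat σ s.B) = permMat σ (matMut (σ.symm k) s.B)
    ext i j
    unfold matMut permMat
    simp only [Matrix.of_apply, EmbeddingLike.apply_eq_iff_eq]

end ClusterPaperAux

open ClusterPaper ClusterPaper.LSeed in
/-- The pullback of an exchange graph automorphism commutes with
permutations: `φ^Δ(u·σ) = φ^Δ(u)·σ` for every labelled seed `u` and permutation `σ`. -/
theorem pullback_commutes_with_permutations {n : ℕ} (s₀ : LSeed n)
    (hx : AlgebraicIndependent ℂ s₀.x) (hB : IsSkewSymmetrizable s₀.B)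
    (hdet : DetByCluster s₀)
    (φ : Equiv.Perm (S s₀)) (hφ : IsExchAut φ)
    (dφ : Equiv.Perm (S0 s₀)) (hdφ : IsPullback φ dφ)
    (u : S0 s₀) (σ : Equiv.Perm (Fin n)) :
    dφ (perm0 σ u) = perm0 σ (dφ u) := by
  obtain ⟨hlab, hpr⟩ := hdφ
  have hgood : ∀ t : S0 s₀, ClusterPaperAux.Good t.1 := by
    intro t
    refine ClusterPaperAux.good_of_inClass ⟨hx, ?_⟩ t.1 t.2
    obtain ⟨d, hd, hmat⟩ := hB
    refine ⟨d, hd, fun i j => ?_⟩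
    have := congrFun (congrFun hmat i) j
    simpa [Matrix.transpose_apply, Matrix.mul_diagonal, Matrix.neg_apply] using this
  have pr_perm0 : ∀ (τ : Equiv.Perm (Fin n)) (t : S0 s₀), pr (perm0 τ t) = pr t := by
    intro τ t
    refine Quotient.sound ⟨τ⁻¹, ?_⟩
    show permute τ⁻¹ (permute τ t.1) = t.1
    rw [permute_permute, inv_mul_cancel, permute_one]
  have mut0_perm0 : ∀ (k : Fin n) (τ : Equiv.Perm (Fin n)) (t : S0 s₀),
      mut0 k (perm0 τ t) = perm0 τ (mut0 (τ.symm k) t) := fun k τ t =>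
    Subtype.ext (ClusterPaperAux.mutate_permute τ k t.1)
  set v := dφ (perm0 σ u) with hv
  set w := perm0 σ (dφ u) with hw
  have hprvw : pr v = pr w := by
    rw [hv, hw, hpr, pr_perm0, pr_perm0, hpr]
  obtain ⟨τ, hτ⟩ := Quotient.exact hprvw
  have hmut : ∀ k : Fin n, pr (mut0 k w) = pr (mut0 k v) := by
    intro k
    have hL : pr (mut0 k w) = φ (pr (mut0 (σ.symm k) u)) := by
      rw [hw, mut0_perm0, pr_perm0, ← hlab, hpr]
    have hR : pr (mut0 k v) = φ (pr (mut0 (σ.symm k) u)) := by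
      rw [hv, ← hlab, hpr, mut0_perm0, pr_perm0]
    rw [hL, hR]
  have hτid : ∀ k : Fin n, τ.symm k = k := by
    intro k
    have hstep : mut0 k w = perm0 τ (mut0 (τ.symm k) v) := by
      refine Subtype.ext ?_
      show LSeed.mutate k w.1 = permute τ (LSeed.mutate (τ.symm k) v.1)
      rw [← ClusterPaperAux.mutate_permute, hτ]
    have h2 : pr (mut0 (τ.symm k) v) = pr (mut0 k v) := by
      rw [← pr_perm0 τ (mut0 (τ.symm k) v), ← hstep, hmut k]
    obtain ⟨ρ, hρ⟩ := Quotient.exact h2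
    exact ClusterPaperAux.mutate_index_eq (hgood v) ρ hρ
  have hτ1 : τ = 1 := by
    ext i
    have h := hτid (τ i)
    rw [Equiv.symm_apply_apply] at h
    exact congrArg Fin.val h.symm
  refine Subtype.ext ?_
  show v.1 = w.1
  rw [← hτ, hτ1, permute_one]
end
end

section
/- Exchange graph automorphisms preserve geodesic loops: let A be a cluster algebra with exchange graph E_A, let φ ∈ Aut E_A, let u be a seed and let a, b be two vertices of u. Then the geodesic loop L^{a,b}_u is isomorphic (as a graph, in particular of the same length) to the geodesic loop L^{φ_v(a),φ_v(b)}_{φ(u)}, where φ_v denotes the induced map on the vertices/cluster variables of u determined by the pullback of φ to the labelled exchange graph. -/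
noncomputable section

open Matrix
namespace ClusterPaper

open LSeed

/-- Alternating mutations on the labelled mutation class, mirroring `altMut`. -/
def altMut0 {n : ℕ} {s₀ : LSeed n} : Fin n → Fin n → ℕ → S0 s₀ → S0 s₀
  | _, _, 0, u => u
  | i, j, c + 1, u => altMut0 j i c (mut0 i u)

theorem altMut0_val {n : ℕ} {s₀ : LSeed n} (i j : Fin n) (c : ℕ) (u : S0 s₀) :
    (altMut0 i j c u).1 = altMut i j c u.1 := by
  induction c generalizing i j u with
  | zero => rfl
  | succ c ih => exact ih j i (mut0 i u)

theorem labAut_altMut0 {n : ℕ} {s₀ : LSeed n} (g : Equiv.Perm (S0 s₀)) (hg : IsLabAut g)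
    (i j : Fin n) (c : ℕ) (u : S0 s₀) :
    g (altMut0 i j c u) = altMut0 i j c (g u) := by
  induction c generalizing i j u with
  | zero => rfl
  | succ c ih =>
    show g (altMut0 j i c (mut0 i u)) = altMut0 j i c (mut0 i (g u))
    rw [ih, hg]

theorem pr_eq_iff {n : ℕ} {s₀ : LSeed n} (v w : S0 s₀) :
    pr v = pr w ↔ ∃ σ : Equiv.Perm (Fin n), LSeed.permute σ v.1 = w.1 :=
  Quotient.eq

end ClusterPaper
open ClusterPaper ClusterPaper.LSeed in
/-- Lemma `lem:fixfrozexch`: exchange graph automorphisms preserve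
geodesic loops: for `φ ∈ Aut E_A` with pullback `φ^Δ`, a seed `u` and two vertices
`a ≠ b`, the geodesic loop `L^{a,b}_u` is isomorphic to the geodesic loop
`L^{φ_v(a),φ_v(b)}_{φ(u)}` (the loops being cycles or infinite lines, this is
equivalent to having equal length). -/
theorem exchange_aut_preserves_geodesic_loops {n : ℕ} (s₀ : LSeed n)
    (hx : AlgebraicIndependent ℂ s₀.x) (hB : IsSkewSymmetrizable s₀.B)
    (hdet : DetByCluster s₀)
    (φ : Equiv.Perm (S s₀)) (hφ : IsExchAut φ)
    (dφ : Equiv.Perm (S0 s₀)) (hdφ : IsPullback φ dφ)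
    (u : S0 s₀) (a b : Fin n) (hab : a ≠ b) :
    loopLen u.1 a b = loopLen (dφ u).1 a b := by
  have key : ∀ c : ℕ,
      (∃ σ : Equiv.Perm (Fin n), permute σ (altMut a b c u.1) = u.1) ↔
      (∃ σ : Equiv.Perm (Fin n), permute σ (altMut a b c (dφ u).1) = (dφ u).1) := by
    intro c
    rw [← altMut0_val a b c u, ← altMut0_val a b c (dφ u),
      ← pr_eq_iff, ← pr_eq_iff, ← labAut_altMut0 dφ hdφ.1 a b c u,
      hdφ.2, hdφ.2]
    exact ⟨fun h => congrArg φ h, fun h => φ.injective h⟩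
  unfold loopLen
  congr 1
  ext r
  simp only [Set.mem_setOf_eq]
  constructor
  · rintro ⟨c, hc, rfl, hσ⟩
    exact ⟨c, hc, rfl, (key c).mp hσ⟩
  · rintro ⟨c, hc, rfl, hσ⟩
    exact ⟨c, hc, rfl, (key c).mpr hσ⟩
end
end
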